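/- arXiv:1710.07732 — 6 statements merged into one kernel-verified Lean document; each statement's English description precedes it below -/
import Mathlib

section
/- Let π be a probability density on F with respect to ρ, and for each z^n let π̂(·|z^n) be a probability density on F with respect to ρ. Define w(z^n, f) := π(f)/π̂(f|z^n). Then the generalized Shtarkov integral S(F, Π̂, w) := E_{Z^n∼P}[exp(−E_{f∼Π̂|Z^n}[η R_f(Z^n) + log C(f) − log w(Z^n,f)])] satisfies S(F, Π̂, w) ≤ 1, where C(f) = E_{Z^n∼P}[exp(−η R_f(Z^n))] and R_f(z^n) = Σ_i (ℓ_f(z_i) − ℓ_{f*}(z_i)). -/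
open MeasureTheory

/-!
Jensen's inequality moves the posterior expectation out of the exponential, so the Shtarkov
integrand is at most `∫ π̂(f|zⁿ) q_f(zⁿ) w(zⁿ,f) dρ(f) = ∫ π(f) q_f(zⁿ) dρ(f)`, since the
luckiness function cancels the posterior. By Fubini the `μ`-integral of this mixture of the
probability densities `q_f` is `∫ π dρ = 1`.
-/

theorem Real.exp_integral_mul_le_integral_mul_exp {α : Type*} [MeasurableSpace α]
    {ρ : Measure α} {g Y : α → ℝ} (hg : 0 ≤ g)
    (hg1 : ∫ a, g a ∂ρ = 1) (hgY : Integrable (fun a => g a * Y a) ρ)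
    (hgexp : Integrable (fun a => g a * Real.exp (Y a)) ρ) :
    Real.exp (∫ a, g a * Y a ∂ρ) ≤ ∫ a, g a * Real.exp (Y a) ∂ρ := by
  set m := ∫ a, g a * Y a ∂ρ
  have hg_int : Integrable g ρ := by
    by_contra h
    rw [integral_undef h] at hg1
    exact zero_ne_one hg1
  -- the tangent line of `exp` at `m` lies below `exp`
  have htangent : ∀ a, g a * (Real.exp m * (Y a - m + 1)) ≤ g a * Real.exp (Y a) := fun a => by
    refine mul_le_mul_of_nonneg_left ?_ (hg a)
    calc Real.exp m * (Y a - m + 1) ≤ Real.exp m * Real.exp (Y a - m) :=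
          mul_le_mul_of_nonneg_left (Real.add_one_le_exp _) (Real.exp_pos m).le
      _ = Real.exp (Y a) := by rw [← Real.exp_add, add_sub_cancel]
  have hsplit : (fun a => g a * (Real.exp m * (Y a - m + 1)))
      = fun a => Real.exp m * (g a * Y a) + Real.exp m * (1 - m) * g a := by
    ext a; ring
  calc Real.exp m = ∫ a, g a * (Real.exp m * (Y a - m + 1)) ∂ρ := by
        rw [hsplit, integral_add (hgY.const_mul _) (hg_int.const_mul _), integral_const_mul,
          integral_const_mul, hg1]
        ring
    _ ≤ ∫ a, g a * Real.exp (Y a) ∂ρ := by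
        refine integral_mono ?_ hgexp htangent
        rw [hsplit]
        exact (hgY.const_mul _).add (hg_int.const_mul _)

theorem integral_integral_eq_one_of_eq_density_mul_density {Zn F : Type*} [MeasurableSpace Zn]
    [MeasurableSpace F] {μ : Measure Zn} [SFinite μ] {ρ : Measure F} [SFinite ρ]
    {k : Zn → F → ℝ} (hk : Integrable (fun p : Zn × F => k p.1 p.2) (μ.prod ρ))
    {π : F → ℝ} {q : F → Zn → ℝ} (hkq : ∀ zn f, k zn f = π f * q f zn)
    (hπ1 : ∫ f, π f ∂ρ = 1) (hq1 : ∀ f, ∫ zn, q f zn ∂μ = 1) :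
    ∫ zn, ∫ f, k zn f ∂ρ ∂μ = 1 := by
  rw [integral_integral_swap hk, ← hπ1]
  refine integral_congr_ae (Filter.Eventually.of_forall fun f => ?_)
  simp only [hkq, integral_const_mul, hq1, mul_one]

theorem Real.exp_neg_add_log_sub_log {a c w : ℝ} (hc : 0 < c) (hw : 0 < w) :
    Real.exp (-(a + Real.log c - Real.log w)) = Real.exp (-a) / c * w := by
  rw [show -(a + Real.log c - Real.log w) = -a - Real.log c + Real.log w by ring,
    Real.exp_add, Real.exp_sub, Real.exp_log hc, Real.exp_log hw]

theorem generalized_shtarkov_le_one_general {Zn F : Type*} [MeasurableSpace Zn] [MeasurableSpace F]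
    (μ : Measure Zn) [IsProbabilityMeasure μ] (ρ : Measure F) [SigmaFinite ρ]
    (η : ℝ)
    (R : F → Zn → ℝ)
    (π : F → ℝ) (πhat : Zn → F → ℝ)
    (hπpos : ∀ f, 0 < π f) (hπhatpos : ∀ zn f, 0 < πhat zn f)
    (hπ1 : ∫ f, π f ∂ρ = 1) (hπhat1 : ∀ zn, ∫ f, πhat zn f ∂ρ = 1)
    (C : F → ℝ)
    (hCpos : ∀ f, 0 < C f)
    (hq1 : ∀ f, ∫ zn, Real.exp (-η * R f zn) / C f ∂μ = 1)
    (w : Zn → F → ℝ) (hw : ∀ zn f, w zn f = π f / πhat zn f)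
    (hFub : Integrable (fun p : Zn × F =>
        πhat p.1 p.2 * (Real.exp (-η * R p.2 p.1) / C p.2) * w p.1 p.2) (μ.prod ρ))
    (hinner : ∀ zn, Integrable (fun f =>
        πhat zn f * (η * R f zn + Real.log (C f) - Real.log (w zn f))) ρ) :
    ∫ zn, Real.exp (- ∫ f, πhat zn f *
        (η * R f zn + Real.log (C f) - Real.log (w zn f)) ∂ρ) ∂μ ≤ 1 := by
  have hwpos : ∀ zn f, 0 < w zn f := fun zn f => by
    rw [hw]; exact div_pos (hπpos f) (hπhatpos zn f)
  have hexp : ∀ zn f, πhat zn f * Real.exp (-(η * R f zn + Real.log (C f) - Real.log (w zn f)))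
      = πhat zn f * (Real.exp (-η * R f zn) / C f) * w zn f := fun zn f => by
    rw [Real.exp_neg_add_log_sub_log (hCpos f) (hwpos zn f), neg_mul, mul_assoc]
  have hjensen : ∀ᵐ zn ∂μ, Real.exp (- ∫ f, πhat zn f *
      (η * R f zn + Real.log (C f) - Real.log (w zn f)) ∂ρ)
      ≤ ∫ f, πhat zn f * (Real.exp (-η * R f zn) / C f) * w zn f ∂ρ := by
    filter_upwards [hFub.prod_right_ae] with zn hsection
    simp only [← hexp, ← integral_neg, ← mul_neg] at hsection ⊢
    exact Real.exp_integral_mul_le_integral_mul_exp (fun f => (hπhatpos zn f).le) (hπhat1 zn)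
      (by simpa only [mul_neg] using (hinner zn).fun_neg) hsection
  have hcancel : ∀ zn f, πhat zn f * (Real.exp (-η * R f zn) / C f) * w zn f
      = π f * (Real.exp (-η * R f zn) / C f) := fun zn f => by
    rw [hw]; field_simp [(hπhatpos zn f).ne']
  calc _ ≤ ∫ zn, ∫ f, πhat zn f * (Real.exp (-η * R f zn) / C f) * w zn f ∂ρ ∂μ :=
        integral_mono_of_nonneg (Filter.Eventually.of_forall fun _ => (Real.exp_pos _).le)
          hFub.integral_prod_left hjensen
    _ = 1 := integral_integral_eq_one_of_eq_density_mul_density hFub hcancel hπ1 hq1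

/-- Proposition 1 (first part): with luckiness function w(z^n,f) = π(f)/π̂(f|z^n),
the generalized Shtarkov integral S(F, Π̂, w) is at most 1. -/
theorem generalized_shtarkov_le_one {Zn F : Type*} [MeasurableSpace Zn] [MeasurableSpace F]
    (μ : Measure Zn) [IsProbabilityMeasure μ] (ρ : Measure F) [SigmaFinite ρ]
    (η : ℝ) (hη : 0 < η)
    (R : F → Zn → ℝ) (hmeas : Measurable (Function.uncurry R))
    (π : F → ℝ) (πhat : Zn → F → ℝ)
    (hπpos : ∀ f, 0 < π f) (hπhatpos : ∀ zn f, 0 < πhat zn f)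
    (hmeasπ : Measurable π) (hmeasπhat : Measurable (Function.uncurry πhat))
    (hπ1 : ∫ f, π f ∂ρ = 1) (hπhat1 : ∀ zn, ∫ f, πhat zn f ∂ρ = 1)
    (C : F → ℝ) (hC : ∀ f, C f = ∫ zn, Real.exp (-η * R f zn) ∂μ)
    (hCpos : ∀ f, 0 < C f)
    (hq1 : ∀ f, ∫ zn, Real.exp (-η * R f zn) / C f ∂μ = 1)
    (w : Zn → F → ℝ) (hw : ∀ zn f, w zn f = π f / πhat zn f)
    (hFub : Integrable (fun p : Zn × F =>
        πhat p.1 p.2 * (Real.exp (-η * R p.2 p.1) / C p.2) * w p.1 p.2) (μ.prod ρ))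
    (hinner : ∀ zn, Integrable (fun f =>
        πhat zn f * (η * R f zn + Real.log (C f) - Real.log (w zn f))) ρ) :
    ∫ zn, Real.exp (- ∫ f, πhat zn f *
        (η * R f zn + Real.log (C f) - Real.log (w zn f)) ∂ρ) ∂μ ≤ 1 :=
  generalized_shtarkov_le_one_general μ ρ η R π πhat hπpos hπhatpos hπ1 hπhat1 C hCpos hq1 w hw hFub
    hinner
end

section
/- For every randomized estimator Π̂ and every luckiness function w : Z^n × F → [0,∞), the exponential moment identity holds: E_{Z^n∼P}[exp(nη·(E_{f∼Π̂|Z^n}[E^{(η)}_{Z̄∼P}[R_f(Z̄)]] − (1/n) comp^full(F, Π̂, w, Z^n)))] = 1, i.e., the annealed excess risk of Π̂ is stochastically bounded (with equality of exponential moments) by comp^full/n at rate nη. -/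
/-!
Since `R_n f` is a sum of i.i.d. terms, `log C(f) = n log E_P[exp(-η R_1 f)]`, i.e. the annealed
risk is `-(1/(nη)) log C(f)`. Substituting this into the definition of `comp^full`, the exponent
becomes `-E_{Π̂}[η R_n f + log C(f) - log w] - log S`, so the integrand is the Shtarkov integrand
divided by its own integral `S`.
-/

open MeasureTheory Real

theorem log_integral_pi_exp_neg_mul_sum {ι E : Type*} [Fintype ι] [MeasurableSpace E]
    (μ : Measure E) [SigmaFinite μ] (η : ℝ) (g : E → ℝ) :
    log (∫ x, exp (-η * ∑ i, g (x i)) ∂(Measure.pi fun _ : ι => μ)) =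
      Fintype.card ι * log (∫ z, exp (-η * g z) ∂μ) := by
  simp_rw [Finset.mul_sum, exp_sum]
  rw [integral_fintype_prod_eq_pow (fun z => exp (-η * g z)), log_pow]

theorem integral_exp_sub_log_integral_exp {α : Type*} [MeasurableSpace α] {μ : Measure α}
    {g : α → ℝ} (hg : 0 < ∫ x, exp (g x) ∂μ) :
    ∫ x, exp (g x - log (∫ y, exp (g y) ∂μ)) ∂μ = 1 := by
  simp_rw [exp_sub, exp_log hg]
  rw [integral_div, div_self hg.ne']

theorem integral_mul_const_mul_add_sub {α : Type*} [MeasurableSpace α] {μ : Measure α}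
    {p a b c : α → ℝ} (η : ℝ) (ha : Integrable (fun x => p x * a x) μ)
    (hb : Integrable (fun x => p x * b x) μ) (hc : Integrable (fun x => p x * c x) μ) :
    ∫ x, p x * (η * a x + b x - c x) ∂μ =
      η * ∫ x, p x * a x ∂μ + ∫ x, p x * b x ∂μ - ∫ x, p x * c x ∂μ := by
  have hηa : Integrable (fun x => η * (p x * a x)) μ := ha.const_mul η
  have hηab : Integrable (fun x => η * (p x * a x) + p x * b x) μ := hηa.add hb
  calc ∫ x, p x * (η * a x + b x - c x) ∂μ
      = ∫ x, η * (p x * a x) + p x * b x - p x * c x ∂μ := by congr 1 with x; ring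
    _ = η * ∫ x, p x * a x ∂μ + ∫ x, p x * b x ∂μ - ∫ x, p x * c x ∂μ := by
      rw [integral_sub hηab hc, integral_add hηa hb, integral_const_mul]

theorem exponential_moment_identity_general {Z F : Type*} [MeasurableSpace Z] [MeasurableSpace F]
    (P : Measure Z) [IsProbabilityMeasure P] (ρ : Measure F)
    (n : ℕ) (hn : 0 < n) (η : ℝ) (hη : 0 < η)
    (R1 : F → Z → ℝ)
    (Rn : F → (Fin n → Z) → ℝ) (hRn : ∀ f zn, Rn f zn = ∑ i, R1 f (zn i))
    (C : F → ℝ)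
    (hC : ∀ f, C f = ∫ zn, Real.exp (-η * Rn f zn) ∂(Measure.pi fun _ : Fin n => P))
    (w : (Fin n → Z) → F → ℝ)
    (πhat : (Fin n → Z) → F → ℝ)
    (S : ℝ)
    (hS : S = ∫ zn, Real.exp (- ∫ f, πhat zn f *
        (η * Rn f zn + Real.log (C f) - Real.log (w zn f)) ∂ρ)
        ∂(Measure.pi fun _ : Fin n => P))
    (hSpos : 0 < S)
    (hint1 : ∀ zn, Integrable (fun f => πhat zn f * Rn f zn) ρ)
    (hint2 : ∀ zn, Integrable (fun f => πhat zn f * Real.log (C f)) ρ)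
    (hint3 : ∀ zn, Integrable (fun f => πhat zn f * Real.log (w zn f)) ρ)
    (comp compfull : (Fin n → Z) → ℝ)
    (hcomp : ∀ zn, comp zn =
        (1/η) * ((∫ f, πhat zn f * (- Real.log (w zn f)) ∂ρ) + Real.log S))
    (hcompfull : ∀ zn, compfull zn = comp zn + ∫ f, πhat zn f * Rn f zn ∂ρ) :
    ∫ zn, Real.exp ((n * η) *
        ((∫ f, πhat zn f * (-(1/η) * Real.log (∫ z, Real.exp (-η * R1 f z) ∂P)) ∂ρ)
          - (1/(n:ℝ)) * compfull zn)) ∂(Measure.pi fun _ : Fin n => P) = 1 := by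
  have hlogC : ∀ f, log (C f) = n * log (∫ z, exp (-η * R1 f z) ∂P) := fun f => by
    simpa [hC, hRn] using log_integral_pi_exp_neg_mul_sum P η (R1 f) (ι := Fin n)
  have hexponent : ∀ zn, (n * η) *
      ((∫ f, πhat zn f * (-(1/η) * log (∫ z, exp (-η * R1 f z) ∂P)) ∂ρ)
        - (1/(n:ℝ)) * compfull zn) =
      -(∫ f, πhat zn f * (η * Rn f zn + log (C f) - log (w zn f)) ∂ρ) - log S := fun zn => by
    rw [integral_mul_const_mul_add_sub η (hint1 zn) (hint2 zn) (hint3 zn), hcompfull, hcomp]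
    simp only [hlogC, mul_left_comm (πhat zn _), mul_neg, integral_const_mul, integral_neg]
    field_simp
    ring
  simp_rw [hexponent]
  rw [hS] at hSpos ⊢
  exact integral_exp_sub_log_integral_exp hSpos

/-- Theorem 1: for any randomized estimator (posterior densities π̂) and any luckiness
function w, the annealed excess risk is bounded by comp^full/n as an equality of
exponential moments at rate nη:
E_{Z^n}[exp(nη(E_{f∼Π̂|Z^n}[annealed risk of f] - comp^full/n))] = 1. -/
theorem exponential_moment_identity {Z F : Type*} [MeasurableSpace Z] [MeasurableSpace F]
    (P : Measure Z) [IsProbabilityMeasure P] (ρ : Measure F) [SigmaFinite ρ]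
    (n : ℕ) (hn : 0 < n) (η : ℝ) (hη : 0 < η)
    (ℓ : F → Z → ℝ) (fstar : F)
    (R1 : F → Z → ℝ) (hR1 : ∀ f z, R1 f z = ℓ f z - ℓ fstar z)
    (hbdd : ∀ f z, |R1 f z| ≤ 1/2)
    (hmeas : Measurable (Function.uncurry R1))
    (Rn : F → (Fin n → Z) → ℝ) (hRn : ∀ f zn, Rn f zn = ∑ i, R1 f (zn i))
    (C : F → ℝ)
    (hC : ∀ f, C f = ∫ zn, Real.exp (-η * Rn f zn) ∂(Measure.pi fun _ : Fin n => P))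
    (w : (Fin n → Z) → F → ℝ) (hwpos : ∀ zn f, 0 < w zn f)
    (πhat : (Fin n → Z) → F → ℝ) (hπhatpos : ∀ zn f, 0 ≤ πhat zn f)
    (hπhat1 : ∀ zn, ∫ f, πhat zn f ∂ρ = 1)
    (hmeasπhat : Measurable (Function.uncurry πhat))
    (S : ℝ)
    (hS : S = ∫ zn, Real.exp (- ∫ f, πhat zn f *
        (η * Rn f zn + Real.log (C f) - Real.log (w zn f)) ∂ρ)
        ∂(Measure.pi fun _ : Fin n => P))
    (hSpos : 0 < S)
    (hint1 : ∀ zn, Integrable (fun f => πhat zn f * Rn f zn) ρ)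
    (hint2 : ∀ zn, Integrable (fun f => πhat zn f * Real.log (C f)) ρ)
    (hint3 : ∀ zn, Integrable (fun f => πhat zn f * Real.log (w zn f)) ρ)
    (hint4 : ∀ zn, Integrable (fun f =>
        πhat zn f * Real.log (∫ z, Real.exp (-η * R1 f z) ∂P)) ρ)
    (comp compfull : (Fin n → Z) → ℝ)
    (hcomp : ∀ zn, comp zn =
        (1/η) * ((∫ f, πhat zn f * (- Real.log (w zn f)) ∂ρ) + Real.log S))
    (hcompfull : ∀ zn, compfull zn = comp zn + ∫ f, πhat zn f * Rn f zn ∂ρ) :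
    ∫ zn, Real.exp ((n * η) *
        ((∫ f, πhat zn f * (-(1/η) * Real.log (∫ z, Real.exp (-η * R1 f z) ∂P)) ∂ρ)
          - (1/(n:ℝ)) * compfull zn)) ∂(Measure.pi fun _ : Fin n => P) = 1 :=
  exponential_moment_identity_general P ρ n hn η hη R1 Rn hRn C hC w πhat S hS hSpos hint1 hint2
    hint3 comp compfull hcomp hcompfull
end

section
/- Suppose for all f ∈ F that R_f(Z) ∈ [−1/2, 1/2] a.s. and the β-Bernstein condition E[R_f(Z)²] ≤ B·E[R_f(Z)]^β holds for all f ∈ F with β ∈ [0,1] and B > 0. Then the v-central condition holds with v(γ) = min{γ^{1−β}/B, 1}: for all γ > 0 and all f ∈ F, E[exp(−v(γ) R_f(Z))] ≤ exp(v(γ)·γ). -/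
/-!
Second-order Taylor: for `|x| ≤ 1`, `exp (-x) ≤ 1 - x + x²`. With `η = v γ ≤ 1` this gives
`E exp(-η R) ≤ 1 - η μ + η² E R²` where `μ = E R`. The Bernstein condition together with
`η B ≤ γ^{1-β}` and weighted AM-GM, `γ^{1-β} μ^β ≤ γ + μ`, bounds `η² E R²` by `η γ + η μ`.
So `E exp(-η R) ≤ 1 + η γ ≤ exp(η γ)`.
-/

open MeasureTheory

lemma Real.exp_neg_le_one_sub_add_sq {x : ℝ} (hx : |x| ≤ 1) : Real.exp (-x) ≤ 1 - x + x ^ 2 := by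
  have h := abs_le.mp (Real.abs_exp_sub_one_sub_id_le (x := -x) (by rwa [abs_neg]))
  rw [neg_sq] at h
  linarith [h.2]

lemma Real.rpow_one_sub_mul_rpow_le_add {a b β : ℝ} (ha : 0 ≤ a) (hb : 0 ≤ b)
    (hβ0 : 0 ≤ β) (hβ1 : β ≤ 1) : a ^ (1 - β) * b ^ β ≤ a + b := by
  have h := Real.geom_mean_le_arith_mean2_weighted (sub_nonneg.mpr hβ1) hβ0 ha hb (by ring)
  nlinarith

lemma integral_exp_neg_le_one_sub_add_sq {Ω : Type*} [MeasurableSpace Ω] {P : Measure Ω}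
    [IsProbabilityMeasure P] {X : Ω → ℝ} (hX : AEStronglyMeasurable X P)
    (hbound : ∀ᵐ ω ∂P, |X ω| ≤ 1) :
    ∫ ω, Real.exp (-X ω) ∂P ≤ 1 - ∫ ω, X ω ∂P + ∫ ω, X ω ^ 2 ∂P := by
  have hX_int : Integrable X P := .of_bound hX 1 hbound
  have hX2_int : Integrable (fun ω => X ω ^ 2) P := .of_bound (hX.pow 2) 1 <| by
    filter_upwards [hbound] with ω hω
    rw [Real.norm_eq_abs, abs_pow]
    exact pow_le_one₀ (abs_nonneg _) hω
  have hlin_int : Integrable (fun ω => 1 - X ω) P := (integrable_const 1).sub hX_int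
  have hexp_int : Integrable (fun ω => Real.exp (-X ω)) P :=
    .of_bound (Real.continuous_exp.comp_aestronglyMeasurable hX.neg) (Real.exp 1) <| by
      filter_upwards [hbound] with ω hω
      rw [Real.norm_eq_abs, Real.abs_exp]
      exact Real.exp_le_exp.mpr (by linarith [neg_abs_le (X ω)])
  calc ∫ ω, Real.exp (-X ω) ∂P
      ≤ ∫ ω, (1 - X ω + X ω ^ 2) ∂P := by
        refine integral_mono_ae hexp_int (hlin_int.add hX2_int) ?_
        filter_upwards [hbound] with ω hω
        exact Real.exp_neg_le_one_sub_add_sq hω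
    _ = 1 - ∫ ω, X ω ∂P + ∫ ω, X ω ^ 2 ∂P := by
        rw [integral_add hlin_int hX2_int,
          integral_sub (integrable_const 1) hX_int, integral_const, probReal_univ, one_smul]

lemma mul_le_add_of_le_mul_rpow {η B γ μ β m : ℝ} (hγ : 0 < γ) (hμ : 0 ≤ μ)
    (hβ0 : 0 ≤ β) (hβ1 : β ≤ 1) (hB : 0 < B) (hη : 0 ≤ η) (hηB : η ≤ γ ^ (1 - β) / B)
    (hm : m ≤ B * μ ^ β) : η * m ≤ γ + μ :=
  calc η * m ≤ η * (B * μ ^ β) := mul_le_mul_of_nonneg_left hm hη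
    _ = η * B * μ ^ β := by ring
    _ ≤ γ ^ (1 - β) * μ ^ β :=
        mul_le_mul_of_nonneg_right ((le_div_iff₀ hB).mp hηB) (Real.rpow_nonneg hμ _)
    _ ≤ γ + μ := Real.rpow_one_sub_mul_rpow_le_add hγ.le hμ hβ0 hβ1

/-- Lemma 1: the β-Bernstein condition implies the v-central condition with
v(γ) = min{γ^{1-β}/B, 1}, for excess losses bounded in [-1/2, 1/2]. -/
theorem bernstein_implies_central {Ω F : Type*} [MeasurableSpace Ω]
    (P : Measure Ω) [IsProbabilityMeasure P]
    (R : F → Ω → ℝ) (β B : ℝ) (hβ0 : 0 ≤ β) (hβ1 : β ≤ 1) (hB : 0 < B)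
    (hmeas : ∀ f, Measurable (R f))
    (hbdd : ∀ f, ∀ᵐ ω ∂P, R f ω ∈ Set.Icc (-(1/2) : ℝ) (1/2))
    (hmean : ∀ f, 0 ≤ ∫ ω, R f ω ∂P)
    (hBern : ∀ f, ∫ ω, (R f ω)^2 ∂P ≤ B * (∫ ω, R f ω ∂P) ^ β)
    (v : ℝ → ℝ) (hv : ∀ γ, v γ = min (γ ^ (1 - β) / B) 1) :
    ∀ γ > 0, ∀ f, ∫ ω, Real.exp (-(v γ) * R f ω) ∂P ≤ Real.exp (v γ * γ) := by
  intro γ hγ f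
  have hv0 : 0 ≤ v γ := hv γ ▸ le_min (by positivity) zero_le_one
  have hv1 : v γ ≤ 1 := hv γ ▸ min_le_right _ _
  have hvB : v γ ≤ γ ^ (1 - β) / B := hv γ ▸ min_le_left _ _
  have hbound : ∀ᵐ ω ∂P, |v γ * R f ω| ≤ 1 := by
    filter_upwards [hbdd f] with ω ⟨hlo, hhi⟩
    rw [abs_mul, abs_of_nonneg hv0]
    exact mul_le_one₀ hv1 (abs_nonneg _) (abs_le.mpr ⟨by linarith, by linarith⟩)
  have htaylor := integral_exp_neg_le_one_sub_add_sq
    ((hmeas f).const_mul (v γ)).aestronglyMeasurable hbound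
  simp only [neg_mul, mul_pow, integral_const_mul] at htaylor ⊢
  have hbern := mul_le_add_of_le_mul_rpow hγ (hmean f) hβ0 hβ1 hB hv0 hvB (hBern f)
  nlinarith [Real.add_one_le_exp (v γ * γ)]
end

section
/- Let F be a class of predictors, f_0 ∈ F, Q_{f_0} the entropified distribution with density q_{f_0}(z^n) ∝ p(z^n)exp(−η R_{f_0}(z^n)). Then the maximal complexity satisfies comp_η(F) = (1/η) log ∫ sup_{f∈F} q_f(z^n) dν(z^n) ≤ (1/η) log E_{Z^n∼Q_{f_0}}[exp(η T_n)], where T_n = sup_{f∈F} { Σ_j(ℓ_{f_0}(Z_j) − ℓ_f(Z_j)) − E_{Z^n∼Q_{f_0}}[Σ_j(ℓ_{f_0}(Z_j) − ℓ_f(Z_j))] }. -/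
/-!
Every `q_f` is an exponential tilt of `q_{f₀}`: `q_f = (A f₀ / A f)ⁿ · q_{f₀} · exp (η S_f)`, where
`S_f` is the cumulative loss difference `∑ⱼ (ℓ_{f₀} - ℓ_f)(Zⱼ)`. Since `q_f` is a probability
density, `E_{Q_{f₀}} exp (η S_f) = (A f / A f₀)ⁿ`, and Jensen's inequality for `exp` (equivalently,
`KL(Q_{f₀} ‖ Q_f) ≥ 0`) bounds the normalising factor `(A f₀ / A f)ⁿ` by `exp (-η E_{Q_{f₀}} S_f)`.
Hence `q_f ≤ q_{f₀} exp (η T_n)` pointwise for every `f`, and integrating against `νⁿ` gives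
`∫ sup_f q_f dνⁿ ≤ E_{Q_{f₀}} exp (η T_n)`. The left side is at least `∫ q_{f₀} dνⁿ = 1`, so taking
logarithms preserves the inequality.
-/

open MeasureTheory Real

section Density

variable {α : Type*} [MeasurableSpace α] {μ : Measure α} {ρ : α → ℝ}

theorem integral_withDensity_ofReal (hρ : 0 ≤ ρ) (hρm : AEMeasurable ρ μ) (g : α → ℝ) :
    ∫ x, g x ∂μ.withDensity (fun x => ENNReal.ofReal (ρ x)) = ∫ x, ρ x * g x ∂μ := by
  refine (integral_withDensity_eq_integral_smul₀ hρm.real_toNNReal g).trans ?_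
  simp only [NNReal.smul_def, Real.coe_toNNReal _ (hρ _), smul_eq_mul]

theorem integrable_withDensity_ofReal_iff (hρ : 0 ≤ ρ) (hρm : AEMeasurable ρ μ) {g : α → ℝ} :
    Integrable g (μ.withDensity fun x => ENNReal.ofReal (ρ x)) ↔
      Integrable (fun x => ρ x * g x) μ := by
  refine (integrable_withDensity_iff_integrable_smul₀ hρm.real_toNNReal).trans ?_
  simp only [NNReal.smul_def, Real.coe_toNNReal _ (hρ _), smul_eq_mul]

theorem isProbabilityMeasure_withDensity_ofReal (hρ : 0 ≤ ρ) (hρ1 : ∫ x, ρ x ∂μ = 1) :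
    IsProbabilityMeasure (μ.withDensity fun x => ENNReal.ofReal (ρ x)) := by
  constructor
  rw [withDensity_apply _ MeasurableSet.univ, Measure.restrict_univ,
    ← ofReal_integral_eq_lintegral_ofReal (integrable_of_integral_eq_one hρ1)
      (Filter.Eventually.of_forall hρ), hρ1,
    ENNReal.ofReal_one]

theorem integral_mul_div_integral_withDensity (hρ : 0 ≤ ρ) (hρm : AEMeasurable ρ μ) {g : α → ℝ}
    (hg : ∫ x, g x ∂μ.withDensity (fun x => ENNReal.ofReal (ρ x)) ≠ 0) :
    ∫ x, ρ x * g x / ∫ y, g y ∂μ.withDensity (fun x => ENNReal.ofReal (ρ x)) ∂μ = 1 := by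
  rw [integral_div, ← integral_withDensity_ofReal hρ hρm, div_self hg]

theorem integral_le_integral_withDensity_ofReal (hρ : 0 ≤ ρ) (hρm : AEMeasurable ρ μ)
    {g h : α → ℝ} (hg : Integrable g μ)
    (hh : Integrable h (μ.withDensity fun x => ENNReal.ofReal (ρ x)))
    (hgh : ∀ x, g x ≤ ρ x * h x) :
    ∫ x, g x ∂μ ≤ ∫ x, h x ∂μ.withDensity fun x => ENNReal.ofReal (ρ x) := by
  rw [integral_withDensity_ofReal hρ hρm]
  exact integral_mono hg ((integrable_withDensity_ofReal_iff hρ hρm).mp hh) hgh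

theorem le_mul_exp_sub_integral_withDensity {q₀ q X : α → ℝ} {c : ℝ} (hq₀ : 0 ≤ q₀)
    (hq₀1 : ∫ x, q₀ x ∂μ = 1) (hq1 : ∫ x, q x ∂μ = 1) (hc : 0 < c)
    (hX : Integrable X (μ.withDensity fun x => ENNReal.ofReal (q₀ x)))
    (hqX : ∀ x, q x = c * q₀ x * exp (X x)) (x : α) :
    q x ≤ q₀ x * exp (X x - ∫ y, X y ∂μ.withDensity fun x => ENNReal.ofReal (q₀ x)) := by
  set Q := μ.withDensity fun x => ENNReal.ofReal (q₀ x)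
  have hq₀m : AEMeasurable q₀ μ := (integrable_of_integral_eq_one hq₀1).aemeasurable
  have : IsProbabilityMeasure Q := isProbabilityMeasure_withDensity_ofReal hq₀ hq₀1
  have hq₀X : (fun x => q₀ x * exp (X x)) = fun x => q x / c := by
    funext x; rw [hqX]; field_simp
  have hexpX : ∫ x, exp (X x) ∂Q = 1 / c := by
    rw [integral_withDensity_ofReal hq₀ hq₀m, hq₀X, integral_div, hq1]
  have hjensen : exp (∫ x, X x ∂Q) ≤ 1 / c := by
    rw [← hexpX]
    refine convexOn_exp.map_integral_le continuous_exp.continuousOn isClosed_univ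
      (Filter.Eventually.of_forall fun _ => Set.mem_univ _) hX ?_
    rw [Function.comp_def, integrable_withDensity_ofReal_iff hq₀ hq₀m, hq₀X]
    exact (integrable_of_integral_eq_one hq1).div_const c
  have hc_le : c ≤ exp (-∫ x, X x ∂Q) := by
    rw [exp_neg, le_inv_comm₀ hc (exp_pos _)]
    simpa using hjensen
  calc q x = c * (q₀ x * exp (X x)) := by rw [hqX, mul_assoc]
    _ ≤ exp (-∫ x, X x ∂Q) * (q₀ x * exp (X x)) :=
      mul_le_mul_of_nonneg_right hc_le (mul_nonneg (hq₀ x) (exp_nonneg _))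
    _ = q₀ x * exp (X x - ∫ y, X y ∂Q) := by rw [sub_eq_add_neg, exp_add]; ring

end Density

theorem prod_div_mul_exp_eq {ι : Type*} (s : Finset ι) (p a b : ι → ℝ) (η A A₀ : ℝ)
    (hA₀ : A₀ ≠ 0) :
    ∏ i ∈ s, p i * exp (-η * a i) / A =
      (A₀ / A) ^ s.card * (∏ i ∈ s, p i * exp (-η * b i) / A₀) *
        exp (η * ∑ i ∈ s, (b i - a i)) := by
  have h i : p i * exp (-η * a i) / A =
      A₀ / A * (p i * exp (-η * b i) / A₀) * exp (η * (b i - a i)) := by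
    rw [show -η * a i = -η * b i + η * (b i - a i) by ring, exp_add]
    field_simp
  simp_rw [h, Finset.prod_mul_distrib, Finset.prod_const, Finset.mul_sum, exp_sum]

theorem comp_le_exp_moment_Tn_general {Z F : Type*} [MeasurableSpace Z]
    (ν : Measure Z) [SigmaFinite ν] (p : Z → ℝ) (hp : ∀ z, 0 ≤ p z)
    (hmp : Measurable p)
    (P : Measure Z)
    (hP : P = ν.withDensity (fun z => ENNReal.ofReal (p z)))
    (ℓ : F → Z → ℝ) (fstar f0 : F) (η : ℝ) (hη : 0 < η)
    (R : F → Z → ℝ) (hR : ∀ f z, R f z = ℓ f z - ℓ fstar z)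
    (A : F → ℝ) (hA : ∀ f, A f = ∫ z, Real.exp (-η * R f z) ∂P)
    (hApos : ∀ f, 0 < A f)
    (n : ℕ)
    (q1 : F → Z → ℝ) (hq1 : ∀ f z, q1 f z = p z * Real.exp (-η * R f z) / A f)
    (qn : F → (Fin n → Z) → ℝ) (hqn : ∀ f zn, qn f zn = ∏ i, q1 f (zn i))
    (νn : Measure (Fin n → Z)) (hνn : νn = Measure.pi fun _ => ν)
    (Qf0 : Measure (Fin n → Z))
    (hQ : Qf0 = νn.withDensity fun zn => ENNReal.ofReal (qn f0 zn))
    (T : (Fin n → Z) → ℝ)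
    (hT : ∀ zn, T zn = ⨆ f, ((∑ i, (ℓ f0 (zn i) - ℓ f (zn i))) -
        ∫ yn, ∑ i, (ℓ f0 (yn i) - ℓ f (yn i)) ∂Qf0))
    (hbddq : ∀ zn, BddAbove (Set.range fun f => qn f zn))
    (hbddT : ∀ zn : Fin n → Z, BddAbove (Set.range fun f =>
        (∑ i, (ℓ f0 (zn i) - ℓ f (zn i))) -
          ∫ yn, ∑ i, (ℓ f0 (yn i) - ℓ f (yn i)) ∂Qf0))
    (hint1 : Integrable (fun zn => ⨆ f, qn f zn) νn)
    (hint2 : Integrable (fun zn => Real.exp (η * T zn)) Qf0)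
    (hintloss : ∀ f, Integrable (fun yn => ∑ i, (ℓ f0 (yn i) - ℓ f (yn i))) Qf0) :
    (1/η) * Real.log (∫ zn, ⨆ f, qn f zn ∂νn) ≤
      (1/η) * Real.log (∫ zn, Real.exp (η * T zn) ∂Qf0) := by
  subst hP
  have : Nonempty F := ⟨f0⟩
  have hqn_nonneg f : 0 ≤ qn f := fun zn => by
    rw [hqn]
    exact Finset.prod_nonneg fun i _ => by rw [hq1]; have := hApos f; have := hp (zn i); positivity
  have hq1_one f : ∫ z, q1 f z ∂ν = 1 := by
    simp_rw [hq1, hA f]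
    exact integral_mul_div_integral_withDensity hp hmp.aemeasurable (hA f ▸ (hApos f).ne')
  have hqn_one f : ∫ zn, qn f zn ∂νn = 1 := by
    rw [hνn]; simp_rw [hqn]; rw [integral_fintype_prod_eq_pow, hq1_one, one_pow]
  have htilt f zn : qn f zn =
      (A f0 / A f) ^ n * qn f0 zn * exp (η * ∑ i, (ℓ f0 (zn i) - ℓ f (zn i))) := by
    simp_rw [hqn, hq1]
    rw [prod_div_mul_exp_eq _ _ _ (fun i => R f0 (zn i)) _ _ _ (hApos f0).ne', Finset.card_univ,
      Fintype.card_fin]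
    simp_rw [hR, sub_sub_sub_cancel_right]
  have hpt zn : ⨆ f, qn f zn ≤ qn f0 zn * exp (η * T zn) := by
    refine ciSup_le fun f => ?_
    have hcentered := le_mul_exp_sub_integral_withDensity (hqn_nonneg f0) (hqn_one f0)
      (hqn_one f) (pow_pos (div_pos (hApos f0) (hApos f)) n)
      (hQ ▸ (hintloss f).const_mul η) (htilt f) zn
    rw [← hQ, integral_const_mul, ← mul_sub] at hcentered
    have hT_ge := hT zn ▸ le_ciSup (hbddT zn) f
    exact hcentered.trans (mul_le_mul_of_nonneg_left
      (exp_le_exp.mpr (mul_le_mul_of_nonneg_left hT_ge hη.le)) (hqn_nonneg f0 zn))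
  have hqn_f0 : Integrable (qn f0) νn := integrable_of_integral_eq_one (hqn_one f0)
  have hmain : ∫ zn, ⨆ f, qn f zn ∂νn ≤ ∫ zn, exp (η * T zn) ∂Qf0 := hQ ▸
    integral_le_integral_withDensity_ofReal (hqn_nonneg f0) hqn_f0.aemeasurable hint1
      (hQ ▸ hint2) hpt
  have hpos : 0 < ∫ zn, ⨆ f, qn f zn ∂νn := zero_lt_one.trans_le <|
    hqn_one f0 ▸ integral_mono hqn_f0 hint1 fun zn => le_ciSup (hbddq zn) f0
  gcongr

/-- Lemma 2 of the paper: the maximal complexity comp_η(F) = (1/η) log ∫ sup_f q_f dν^n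
is bounded by (1/η) log E_{Z^n∼Q_{f0}}[exp(η T_n)], where T_n is the centered supremum
of the cumulative loss differences. -/
theorem comp_le_exp_moment_Tn {Z F : Type*} [MeasurableSpace Z] [Nonempty F]
    (ν : Measure Z) [SigmaFinite ν] (p : Z → ℝ) (hp : ∀ z, 0 ≤ p z)
    (hmp : Measurable p)
    (P : Measure Z) [IsProbabilityMeasure P]
    (hP : P = ν.withDensity (fun z => ENNReal.ofReal (p z)))
    (ℓ : F → Z → ℝ) (fstar f0 : F) (η : ℝ) (hη : 0 < η)
    (R : F → Z → ℝ) (hR : ∀ f z, R f z = ℓ f z - ℓ fstar z)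
    (A : F → ℝ) (hA : ∀ f, A f = ∫ z, Real.exp (-η * R f z) ∂P)
    (hApos : ∀ f, 0 < A f)
    (n : ℕ)
    (q1 : F → Z → ℝ) (hq1 : ∀ f z, q1 f z = p z * Real.exp (-η * R f z) / A f)
    (qn : F → (Fin n → Z) → ℝ) (hqn : ∀ f zn, qn f zn = ∏ i, q1 f (zn i))
    (νn : Measure (Fin n → Z)) (hνn : νn = Measure.pi fun _ => ν)
    (Qf0 : Measure (Fin n → Z))
    (hQ : Qf0 = νn.withDensity fun zn => ENNReal.ofReal (qn f0 zn))
    (T : (Fin n → Z) → ℝ)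
    (hT : ∀ zn, T zn = ⨆ f, ((∑ i, (ℓ f0 (zn i) - ℓ f (zn i))) -
        ∫ yn, ∑ i, (ℓ f0 (yn i) - ℓ f (yn i)) ∂Qf0))
    (hbddq : ∀ zn, BddAbove (Set.range fun f => qn f zn))
    (hbddT : ∀ zn : Fin n → Z, BddAbove (Set.range fun f =>
        (∑ i, (ℓ f0 (zn i) - ℓ f (zn i))) -
          ∫ yn, ∑ i, (ℓ f0 (yn i) - ℓ f (yn i)) ∂Qf0))
    (hint1 : Integrable (fun zn => ⨆ f, qn f zn) νn)
    (hint2 : Integrable (fun zn => Real.exp (η * T zn)) Qf0)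
    (hintloss : ∀ f, Integrable (fun yn => ∑ i, (ℓ f0 (yn i) - ℓ f (yn i))) Qf0) :
    (1/η) * Real.log (∫ zn, ⨆ f, qn f zn ∂νn) ≤
      (1/η) * Real.log (∫ zn, Real.exp (η * T zn) ∂Qf0) :=
  comp_le_exp_moment_Tn_general ν p hp hmp P hP ℓ fstar f0 η hη R hR A hA hApos n q1 hq1 qn hqn νn
    hνn Qf0 hQ T hT hbddq hbddT hint1 hint2 hintloss
end

section
/- Extended Haussler theorem: Let F be a class of functions on a space S such that for all ε > 0 and all n and all points s_1,...,s_n ∈ S, the L_2(P_n)-covering number of F at radius ε is at most ψ(ε), where P_n is the empirical measure on s_1,...,s_n. Then for every probability measure P on S and every ε > 0, the L_2(P)-covering number satisfies N(F, L_2(P), ε) ≤ ψ(ε/2). -/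
/-!
A finite `ε`-packing of `F` in `L²(P)` is also an `ε`-packing in `L²(Pₙ)` for a suitable sample:
by the strong law of large numbers, applied to the finitely many functions `(f - g)²`, the
empirical squared distances of almost every i.i.d. sample eventually exceed `ε²`. An
`ε`-packing in `L²(Pₙ)` has at most as many points as an `ε/2`-cover, so every `L²(P)`
`ε`-packing has at most `ψ(ε/2)` points, and a maximal one is an `ε`-cover.
-/

open MeasureTheory ProbabilityTheory Filter Topology Finset

theorem exists_finset_forall_exists_of_card_pairwise_le {α : Type*} {r : α → α → Prop}
    (hrefl : ∀ x, r x x) (hsymm : ∀ x y, r x y → r y x) {F : Set α} {N : ℕ}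
    (hcard : ∀ T : Finset α, ↑T ⊆ F → (T : Set α).Pairwise (fun x y => ¬ r x y) → T.card ≤ N) :
    ∃ T : Finset α, T.card ≤ N ∧ ∀ f ∈ F, ∃ g ∈ T, r f g := by
  classical
  by_contra! hfar
  have hgrow (k : ℕ) :
      ∃ T : Finset α, ↑T ⊆ F ∧ (T : Set α).Pairwise (fun x y => ¬ r x y) ∧ T.card = k := by
    induction k with
    | zero => exact ⟨∅, by simp, by simp, rfl⟩
    | succ k ih =>
      obtain ⟨T, hTF, hT, rfl⟩ := ih
      obtain ⟨f, hf, hfT⟩ := hfar T (hcard T hTF hT)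
      have hfT' : f ∉ T := fun hmem => hfT f hmem (hrefl f)
      refine ⟨insert f T, ?_, ?_, card_insert_of_notMem hfT'⟩
      · simpa [Set.insert_subset_iff] using ⟨hf, hTF⟩
      · rw [coe_insert, Set.pairwise_insert]
        exact ⟨hT, fun g hg _ => ⟨hfT g hg, fun hgf => hfT g hg (hsymm g f hgf)⟩⟩
  obtain ⟨T, hTF, hT, hTcard⟩ := hgrow (N + 1)
  have := hcard T hTF hT
  omega

section Sampling

variable {S : Type*} [MeasurableSpace S] (P : Measure S) [IsProbabilityMeasure P]

theorem ae_tendsto_sampleMean {h : S → ℝ} (hm : Measurable h) (hi : Integrable h P) :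
    ∀ᵐ ω ∂(Measure.infinitePi fun _ : ℕ => P),
      Tendsto (fun n : ℕ => (∑ i ∈ range n, h (ω i)) / n) atTop (𝓝 (∫ s, h s ∂P)) := by
  have hcoord (i : ℕ) := (measurePreserving_eval_infinitePi (fun _ : ℕ => P) i).hasLaw
  have hX0 : ∫ ω, h (ω 0) ∂(Measure.infinitePi fun _ : ℕ => P) = ∫ s, h s ∂P :=
    (hcoord 0).integral_comp hm.aestronglyMeasurable
  have hint : Integrable (fun ω : ℕ → S => h (ω 0)) (Measure.infinitePi fun _ : ℕ => P) :=
    (measurePreserving_eval_infinitePi _ 0).integrable_comp_of_integrable hi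
  have hindep : Pairwise fun i j => IndepFun (fun ω : ℕ → S => h (ω i)) (fun ω => h (ω j))
      (Measure.infinitePi fun _ : ℕ => P) :=
    fun i j hij => (iIndepFun_infinitePi (P := fun _ : ℕ => P) (fun _ => hm)).indepFun hij
  have hident (i : ℕ) : IdentDistrib (fun ω : ℕ → S => h (ω i)) (fun ω => h (ω 0))
      (Measure.infinitePi fun _ : ℕ => P) (Measure.infinitePi fun _ : ℕ => P) :=
    ((hcoord i).identDistrib (hcoord 0)).comp hm
  have := strong_law_ae_real (fun i (ω : ℕ → S) => h (ω i)) hint hindep hident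
  rwa [hX0] at this

theorem exists_sample_forall_lt_sampleMean {ι : Type*} (K : Finset ι) {h : ι → S → ℝ}
    (hm : ∀ k ∈ K, Measurable (h k)) (hi : ∀ k ∈ K, Integrable (h k) P) {c : ι → ℝ}
    (hc : ∀ k ∈ K, c k < ∫ s, h k s ∂P) :
    ∃ (n : ℕ) (s : Fin n → S), ∀ k ∈ K, c k < (1 / (n : ℝ)) * ∑ j, h k (s j) := by
  have hae : ∀ᵐ ω ∂(Measure.infinitePi fun _ : ℕ => P), ∀ k ∈ K,
      Tendsto (fun n : ℕ => (∑ i ∈ range n, h k (ω i)) / n) atTop (𝓝 (∫ s, h k s ∂P)) :=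
    (eventually_all_finset K).2 fun k hk => ae_tendsto_sampleMean P (hm k hk) (hi k hk)
  obtain ⟨ω, hω⟩ := hae.exists
  have hev : ∀ᶠ n : ℕ in atTop, ∀ k ∈ K, c k < (∑ i ∈ range n, h k (ω i)) / n :=
    (eventually_all_finset K).2 fun k hk => (hω k hk).eventually (lt_mem_nhds (hc k hk))
  obtain ⟨n, hn⟩ := hev.exists
  refine ⟨n, fun j => ω j, fun k hk => ?_⟩
  rw [Fin.sum_univ_eq_sum_range (fun i => h k (ω i)), one_div_mul_eq_div]
  exact hn k hk

end Sampling

noncomputable section Distances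

variable {S : Type*}

def l2Dist [MeasurableSpace S] (P : Measure S) (f g : S → ℝ) : ℝ :=
  √(∫ s, (f s - g s) ^ 2 ∂P)

def empiricalL2Dist {n : ℕ} (s : Fin n → S) (f g : S → ℝ) : ℝ :=
  √((1 / (n : ℝ)) * ∑ j, (f (s j) - g (s j)) ^ 2)

theorem l2Dist_self [MeasurableSpace S] (P : Measure S) (f : S → ℝ) : l2Dist P f f = 0 := by
  simp [l2Dist]

theorem l2Dist_comm [MeasurableSpace S] (P : Measure S) (f g : S → ℝ) :
    l2Dist P f g = l2Dist P g f := by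
  simp only [l2Dist, ← neg_sub (g _), neg_sq]

theorem empiricalL2Dist_eq_mul_dist {n : ℕ} (s : Fin n → S) (f g : S → ℝ) :
    empiricalL2Dist s f g =
      √(1 / (n : ℝ)) * dist (WithLp.toLp 2 (f ∘ s)) (WithLp.toLp 2 (g ∘ s)) := by
  rw [empiricalL2Dist, EuclideanSpace.dist_eq, ← Real.sqrt_mul (by positivity)]
  simp [Real.dist_eq, sq_abs]

theorem empiricalL2Dist_comm {n : ℕ} (s : Fin n → S) (f g : S → ℝ) :
    empiricalL2Dist s f g = empiricalL2Dist s g f := by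
  rw [empiricalL2Dist_eq_mul_dist, empiricalL2Dist_eq_mul_dist, dist_comm]

theorem empiricalL2Dist_triangle {n : ℕ} (s : Fin n → S) (f g h : S → ℝ) :
    empiricalL2Dist s f h ≤ empiricalL2Dist s f g + empiricalL2Dist s g h := by
  simp only [empiricalL2Dist_eq_mul_dist, ← mul_add]
  exact mul_le_mul_of_nonneg_left (dist_triangle _ _ _) (Real.sqrt_nonneg _)

theorem card_le_card_of_pairwise_lt_empiricalL2Dist {n : ℕ} (s : Fin n → S) {ε : ℝ}
    {T T' : Finset (S → ℝ)}
    (hsep : (T : Set (S → ℝ)).Pairwise fun f g => ε < empiricalL2Dist s f g)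
    (hcov : ∀ f ∈ T, ∃ g ∈ T', empiricalL2Dist s f g ≤ ε / 2) :
    T.card ≤ T'.card := by
  choose! φ hφT' hφ using hcov
  refine card_le_card_of_injOn φ hφT' fun f₁ hf₁ f₂ hf₂ heq => ?_
  by_contra hne
  have htri := empiricalL2Dist_triangle s f₁ (φ f₁) f₂
  rw [heq, empiricalL2Dist_comm s (φ f₂)] at htri
  linarith [hsep hf₁ hf₂ hne, heq ▸ hφ f₁ hf₁, hφ f₂ hf₂]

theorem exists_sample_pairwise_lt_empiricalL2Dist [MeasurableSpace S] (P : Measure S)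
    [IsProbabilityMeasure P] {T : Finset (S → ℝ)} (hm : ∀ f ∈ T, Measurable f)
    (hL2 : ∀ f ∈ T, MemLp f 2 P) {ε : ℝ} (hε : 0 ≤ ε)
    (hsep : (T : Set (S → ℝ)).Pairwise fun f g => ε < l2Dist P f g) :
    ∃ (n : ℕ) (s : Fin n → S),
      (T : Set (S → ℝ)).Pairwise fun f g => ε < empiricalL2Dist s f g := by
  obtain ⟨n, s, hs⟩ := exists_sample_forall_lt_sampleMean P T.offDiag
    (h := fun p x => (p.1 x - p.2 x) ^ 2) (c := fun _ => ε ^ 2)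
    (fun ⟨f, g⟩ hp => by
      obtain ⟨hf, hg, -⟩ := mem_offDiag.1 hp
      exact ((hm f hf).sub (hm g hg)).pow_const 2)
    (fun p hp => by
      obtain ⟨h₁, h₂, -⟩ := mem_offDiag.1 hp
      exact ((hL2 _ h₁).sub (hL2 _ h₂)).integrable_sq)
    (fun p hp => by
      obtain ⟨h₁, h₂, hne⟩ := mem_offDiag.1 hp
      exact (Real.lt_sqrt hε).1 (hsep h₁ h₂ hne))
  exact ⟨n, s, fun f hf g hg hne => (Real.lt_sqrt hε).2 (hs (f, g) (mem_offDiag.2 ⟨hf, hg, hne⟩))⟩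

end Distances

/-- Extended Haussler theorem: if for all n and all empirical measures P_n the
L₂(P_n)-covering numbers of F at radius ε are bounded by ψ(ε), then for every
probability measure P, N(F, L₂(P), ε) ≤ ψ(ε/2). -/
theorem extended_haussler {S : Type*} [MeasurableSpace S]
    (F : Set (S → ℝ)) (ψ : ℝ → ℕ)
    (M : ℝ) (hbdd : ∀ f ∈ F, ∀ s, |f s| ≤ M)
    (hmeas : ∀ f ∈ F, Measurable f)
    (hemp : ∀ (n : ℕ) (s : Fin n → S) (ε : ℝ), 0 < ε →
      ∃ T : Finset (S → ℝ), T.card ≤ ψ ε ∧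
        ∀ f ∈ F, ∃ g ∈ T,
          Real.sqrt ((1/(n:ℝ)) * ∑ j, (f (s j) - g (s j))^2) ≤ ε) :
    ∀ (P : Measure S), IsProbabilityMeasure P → ∀ ε : ℝ, 0 < ε →
      ∃ T : Finset (S → ℝ), T.card ≤ ψ (ε/2) ∧
        ∀ f ∈ F, ∃ g ∈ T, Real.sqrt (∫ s, (f s - g s)^2 ∂P) ≤ ε := by
  intro P _ ε hε
  have hL2 (f : S → ℝ) (hf : f ∈ F) : MemLp f 2 P :=
    .of_bound (hmeas f hf).aestronglyMeasurable M (ae_of_all _ (hbdd f hf))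
  refine exists_finset_forall_exists_of_card_pairwise_le (r := fun f g => l2Dist P f g ≤ ε)
    (fun f => (l2Dist_self P f).trans_le hε.le)
    (fun f g hfg => (l2Dist_comm P g f).trans_le hfg) fun T hTF hT => ?_
  obtain ⟨n, s, hs⟩ := exists_sample_pairwise_lt_empiricalL2Dist P
    (fun f hf => hmeas f (hTF hf)) (fun f hf => hL2 f (hTF hf)) hε.le
    (hT.imp fun _ _ => not_le.1)
  obtain ⟨T', hT'card, hT'cov⟩ := hemp n s (ε / 2) (half_pos hε)
  exact (card_le_card_of_pairwise_lt_empiricalL2Dist s hs fun f hf => hT'cov f (hTF hf)).trans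
    hT'card
end

section
/- Constant luckiness upper bound: for any randomized estimator Π̂ and the constant luckiness function w ≡ 1, for every z^n, comp(F, Π̂, w, z^n) ≤ comp(F) := (1/η) log ∫ sup_{f∈F} q_f(z^n) dν(z^n), assuming comp(F) < ∞. -/
/-!
Write `h f = η R_f(zⁿ) + log C(f)`, so that `exp (-h f) = exp (-η R_f(zⁿ)) / C(f)` is bounded by
its supremum `S(zⁿ)` over `F`. Then `h ≥ -log S(zⁿ)` everywhere, hence so is its average under
the density `Π̂(· | zⁿ)`, i.e. `exp (-E_{Π̂}[h]) ≤ S(zⁿ)`. Integrating in `zⁿ` and taking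
`(1/η) log` of both sides gives the bound.
-/

open MeasureTheory

section

variable {α : Type*} [MeasurableSpace α] {ρ : Measure α} {p g : α → ℝ}

theorem le_integral_mul_of_forall_le {a : ℝ} (hp : ∀ x, 0 ≤ p x) (hp1 : ∫ x, p x ∂ρ = 1)
    (hpg : Integrable (fun x => p x * g x) ρ) (h : ∀ x, a ≤ g x) :
    a ≤ ∫ x, p x * g x ∂ρ := by
  have hp_int : Integrable p ρ := Integrable.of_integral_ne_zero (by simp [hp1])
  calc a = ∫ x, p x * a ∂ρ := by rw [integral_mul_const, hp1, one_mul]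
    _ ≤ ∫ x, p x * g x ∂ρ :=
      integral_mono (hp_int.mul_const a) hpg fun x => mul_le_mul_of_nonneg_left (h x) (hp x)

theorem exp_neg_integral_mul_le_of_forall_exp_neg_le {S : ℝ} (hS : 0 < S) (hp : ∀ x, 0 ≤ p x)
    (hp1 : ∫ x, p x ∂ρ = 1) (hpg : Integrable (fun x => p x * g x) ρ)
    (h : ∀ x, Real.exp (-g x) ≤ S) :
    Real.exp (-∫ x, p x * g x ∂ρ) ≤ S := by
  have hg : ∀ x, -Real.log S ≤ g x := fun x => by
    linarith [(Real.le_log_iff_exp_le hS).2 (h x)]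
  have hint := le_integral_mul_of_forall_le hp hp1 hpg hg
  exact (Real.le_log_iff_exp_le hS).1 (by linarith)

end

theorem Real.exp_neg_add_log {x c : ℝ} (hc : 0 < c) :
    Real.exp (-(x + Real.log c)) = Real.exp (-x) / c := by
  rw [neg_add, Real.exp_add, Real.exp_neg (Real.log c), Real.exp_log hc, div_eq_mul_inv]

theorem comp_randomized_le_maximal_general {Zn F : Type*} [MeasurableSpace Zn] [MeasurableSpace F]
    [Nonempty F]
    (μ : Measure Zn) (ρ : Measure F)
    (η : ℝ) (hη : 0 < η)
    (R : F → Zn → ℝ)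
    (C : F → ℝ)
    (hCpos : ∀ f, 0 < C f)
    (πhat : Zn → F → ℝ) (hπhatpos : ∀ zn f, 0 ≤ πhat zn f)
    (hπhat1 : ∀ zn, ∫ f, πhat zn f ∂ρ = 1)
    (hbdd : ∀ zn, BddAbove (Set.range fun f => Real.exp (-η * R f zn) / C f))
    (hintsup : Integrable (fun zn => ⨆ f, Real.exp (-η * R f zn) / C f) μ)
    (hinner : ∀ zn, Integrable (fun f => πhat zn f * (η * R f zn + Real.log (C f))) ρ)
    (hintS : Integrable (fun zn =>
        Real.exp (- ∫ f, πhat zn f * (η * R f zn + Real.log (C f)) ∂ρ)) μ)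
    (hSpos : 0 < ∫ zn,
        Real.exp (- ∫ f, πhat zn f * (η * R f zn + Real.log (C f)) ∂ρ) ∂μ) :
    (1/η) * Real.log (∫ zn,
        Real.exp (- ∫ f, πhat zn f * (η * R f zn + Real.log (C f)) ∂ρ) ∂μ)
      ≤ (1/η) * Real.log (∫ zn, ⨆ f, Real.exp (-η * R f zn) / C f ∂μ) := by
  have hpointwise : ∀ zn, Real.exp (-∫ f, πhat zn f * (η * R f zn + Real.log (C f)) ∂ρ)
      ≤ ⨆ f, Real.exp (-η * R f zn) / C f := fun zn => by
    have hle : ∀ f, Real.exp (-η * R f zn) / C f ≤ ⨆ f, Real.exp (-η * R f zn) / C f :=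
      le_ciSup (hbdd zn)
    obtain ⟨f₀⟩ := ‹Nonempty F›
    refine exp_neg_integral_mul_le_of_forall_exp_neg_le
      ((div_pos (Real.exp_pos _) (hCpos f₀)).trans_le (hle f₀))
      (hπhatpos zn) (hπhat1 zn) (hinner zn) fun f => ?_
    rw [Real.exp_neg_add_log (hCpos f), ← neg_mul]
    exact hle f
  exact mul_le_mul_of_nonneg_left
    (Real.log_le_log hSpos (integral_mono hintS hintsup hpointwise)) (by positivity)

/-- Proposition 3: for any randomized estimator Π̂ and constant luckiness w ≡ 1,
the complexity comp(F, Π̂, 1, z^n) = (1/η) log S(F, Π̂, 1) is bounded by the maximal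
complexity comp(F) = (1/η) log E_{Z^n∼P}[sup_f exp(-η R_f(Z^n))/C(f)]. -/
theorem comp_randomized_le_maximal {Zn F : Type*} [MeasurableSpace Zn] [MeasurableSpace F]
    [Nonempty F]
    (μ : Measure Zn) [IsProbabilityMeasure μ] (ρ : Measure F) [SigmaFinite ρ]
    (η : ℝ) (hη : 0 < η)
    (R : F → Zn → ℝ) (hmeas : Measurable (Function.uncurry R))
    (C : F → ℝ) (hC : ∀ f, C f = ∫ zn, Real.exp (-η * R f zn) ∂μ)
    (hCpos : ∀ f, 0 < C f)
    (πhat : Zn → F → ℝ) (hπhatpos : ∀ zn f, 0 ≤ πhat zn f)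
    (hπhat1 : ∀ zn, ∫ f, πhat zn f ∂ρ = 1)
    (hbdd : ∀ zn, BddAbove (Set.range fun f => Real.exp (-η * R f zn) / C f))
    (hintsup : Integrable (fun zn => ⨆ f, Real.exp (-η * R f zn) / C f) μ)
    (hinner : ∀ zn, Integrable (fun f => πhat zn f * (η * R f zn + Real.log (C f))) ρ)
    (hintS : Integrable (fun zn =>
        Real.exp (- ∫ f, πhat zn f * (η * R f zn + Real.log (C f)) ∂ρ)) μ)
    (hpos : 0 < ∫ zn, ⨆ f, Real.exp (-η * R f zn) / C f ∂μ)
    (hSpos : 0 < ∫ zn,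
        Real.exp (- ∫ f, πhat zn f * (η * R f zn + Real.log (C f)) ∂ρ) ∂μ) :
    (1/η) * Real.log (∫ zn,
        Real.exp (- ∫ f, πhat zn f * (η * R f zn + Real.log (C f)) ∂ρ) ∂μ)
      ≤ (1/η) * Real.log (∫ zn, ⨆ f, Real.exp (-η * R f zn) / C f ∂μ) :=
  comp_randomized_le_maximal_general μ ρ η hη R C hCpos πhat hπhatpos hπhat1 hbdd hintsup hinner
    hintS hSpos
end
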